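/- arXiv:1206.2512 — 5 statements merged into one kernel-verified Lean document; each statement's English description precedes it below -/
import Mathlib

section
/- Let H be a 2-regular k-uniform hypergraph, i.e., every edge of H has exactly k vertices and every vertex of H lies in exactly two edges. Then the Graver basis of I_H generates the ideal I_H, and every element of the Graver basis is an indispensable binomial of I_H (so every binomial generating set of I_H contains each Graver basis element up to sign); consequently the Graver basis is the unique minimal binomial generating set of I_H. -/
open MvPolynomial

namespace ToricHG

variable (K : Type) [Field K] (V : Type) [Fintype V] [DecidableEq V]

/-- The edges of a hypergraph with edge set `E`, as a type. -/
abbrev Edge (E : Finset (Finset V)) : Type := {e : Finset V // e ∈ E}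

/-- The monomial map `t_e ↦ ∏_{v ∈ e} x_v`. -/
noncomputable def phiH (E : Finset (Finset V)) :
    MvPolynomial (Edge V E) K →ₐ[K] MvPolynomial V K :=
  aeval (fun e : Edge V E => ∏ v ∈ e.1, (X v : MvPolynomial V K))

/-- The toric ideal of a hypergraph. -/
noncomputable def toricIdeal (E : Finset (Finset V)) :
    Ideal (MvPolynomial (Edge V E) K) :=
  RingHom.ker (phiH K V E).toRingHom

/-- The number of edges of the multiset `M` containing `v`, counted with multiplicity. -/
def degIn (E : Finset (Finset V)) (v : V) (M : Multiset (Edge V E)) : ℕ :=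
  Multiset.card (M.filter (fun e => v ∈ e.1))

/-- The bicolored edge multiset `(B, R)` is balanced. -/
def Balanced (E : Finset (Finset V)) (B R : Multiset (Edge V E)) : Prop :=
  ∀ v : V, degIn V E v B = degIn V E v R

/-- The binomial arising from the bicolored edge multiset `(B, R)`. -/
noncomputable def binom (E : Finset (Finset V)) (B R : Multiset (Edge V E)) :
    MvPolynomial (Edge V E) K :=
  (B.map fun e => (X e : MvPolynomial (Edge V E) K)).prod -
    (R.map fun e => (X e : MvPolynomial (Edge V E) K)).prod

/-- The balanced edge set `(B, R)` is primitive. -/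
def Primitive (E : Finset (Finset V)) (B R : Multiset (Edge V E)) : Prop :=
  Balanced V E B R ∧
    ¬ ∃ B' R' : Multiset (Edge V E),
        ¬(B' = 0 ∧ R' = 0) ∧ Balanced V E B' R' ∧ B' < B ∧ R' < R

/-- The balanced edge set `(Fb, Fr)` is reducible with separator `S` and
decomposition `((G1b, G1r), S, (G2b, G2r))`. -/
def ReducibleWith (E : Finset (Finset V))
    (Fb Fr S G1b G1r G2b G2r : Multiset (Edge V E)) : Prop :=
  Balanced V E Fb Fr ∧ S ≠ 0 ∧ S.toFinset ⊆ (Fb + Fr).toFinset ∧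
    Balanced V E G1b G1r ∧ Balanced V E G2b G2r ∧
    ¬(G1b = Fb ∧ G1r = Fr) ∧ ¬(G2b = Fb ∧ G2r = Fr) ∧
    S = G1r ∩ G2b ∧ Fb = G1b + G2b ∧ Fr = G1r + G2r

/-- `S` is a splitting set of the balanced edge set `(Eb, Er)` with
decomposition `((G1b, G1r), S, (G2b, G2r))`, i.e. `(Eb, Er) + S` is reducible with
separator `S` and this decomposition. -/
def SplittingSetWith (E : Finset (Finset V))
    (Eb Er S G1b G1r G2b G2r : Multiset (Edge V E)) : Prop :=
  ReducibleWith V E (Eb + S) (Er + S) S G1b G1r G2b G2r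

/-- `S` is a proper splitting set of the balanced edge set `(Eb, Er)`. -/
def ProperSplittingSet (E : Finset (Finset V))
    (Eb Er S : Multiset (Edge V E)) : Prop :=
  ∃ G1b G1r G2b G2r : Multiset (Edge V E),
    SplittingSetWith V E Eb Er S G1b G1r G2b G2r ∧ S < G1r ∧ S < G2b

/-- A binomial: the difference of two distinct monic monomials. -/
def IsBinomial (E : Finset (Finset V)) (f : MvPolynomial (Edge V E) K) : Prop :=
  ∃ a b : (Edge V E) →₀ ℕ, a ≠ b ∧ f = monomial a 1 - monomial b 1

/-- `f` is an indispensable binomial of the toric ideal of the hypergraph. -/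
def Indispensable (E : Finset (Finset V)) (f : MvPolynomial (Edge V E) K) : Prop :=
  ∀ G : Set (MvPolynomial (Edge V E) K),
    (∀ g ∈ G, IsBinomial K V E g) → Ideal.span G = toricIdeal K V E →
      f ∈ G ∨ -f ∈ G

/-- The Graver basis of the toric ideal of the hypergraph: the binomials arising from
primitive balanced edge sets `(B, R)` with `B ≠ R`. -/
def GraverSet (E : Finset (Finset V)) : Set (MvPolynomial (Edge V E) K) :=
  {f | ∃ B R : Multiset (Edge V E), Primitive V E B R ∧ B ≠ R ∧ f = binom K V E B R}

/-- The ideal `I` is generated in degree at most `d`. -/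
def GenInDegLE {σ : Type} (I : Ideal (MvPolynomial σ K)) (d : ℕ) : Prop :=
  I = Ideal.span {f | f ∈ I ∧ f.totalDegree ≤ d}

end ToricHG

/-!
The toric ideal is the kernel of a monomial map, hence spanned by the binomials of balanced
pairs; a balanced pair that is not primitive splits off a smaller balanced pair, which writes its
binomial as a combination of two smaller ones. So the Graver basis generates, for any hypergraph.

If binomials generate an ideal containing `t^B - t^R`, some generator `±(t^u - t^v)` with `u ≠ v`
has `u ≤ B`: otherwise the coefficient of `t^B` would vanish on the whole ideal. In a `2`-regular hypergraph the two edges through a vertex carry opposite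
multiplicity differences in every balanced pair; this rigidity forces a balanced pair `(u, v)`
with `u ≤ B`, `u ≠ v` to be `(B, R)` itself when `(B, R)` is primitive.
-/

namespace MvPolynomial

variable {σ τ R : Type*} [CommRing R]

theorem monomial_eq_smul_monomial_one (a : σ →₀ ℕ) (c : R) :
    monomial a c = c • monomial a (1 : R) := by
  rw [smul_monomial, smul_eq_mul, mul_one]

theorem ker_le_span_monomial_sub_monomial (φ : MvPolynomial σ R →ₗ[R] MvPolynomial τ R)
    (d : (σ →₀ ℕ) → (τ →₀ ℕ)) (hφ : ∀ a, φ (monomial a 1) = monomial (d a) 1) :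
    LinearMap.ker φ ≤
      Submodule.span R {p | ∃ a b, d a = d b ∧ p = monomial a 1 - monomial b 1} := by
  intro p hp
  -- `ψ ∘ φ` replaces each monomial by a fixed representative of its fibre under `d`
  let ψ := (basisMonomials τ R).constr R fun t => monomial (Function.invFun d t) (1 : R)
  have hψφ : ∀ a, ψ (φ (monomial a 1)) = monomial (Function.invFun d (d a)) 1 := by
    intro a
    rw [hφ]
    exact (basisMonomials τ R).constr_basis R _ (d a)
  suffices h : ∀ q, q - ψ (φ q) ∈
      Submodule.span R {p | ∃ a b, d a = d b ∧ p = monomial a 1 - monomial b 1} by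
    simpa [LinearMap.mem_ker.1 hp] using h p
  intro q
  induction q using MvPolynomial.induction_on' with
  | monomial a c =>
    rw [monomial_eq_smul_monomial_one, map_smul, map_smul, hψφ, ← smul_sub]
    exact Submodule.smul_mem _ _ (Submodule.subset_span
      ⟨a, _, (Function.invFun_eq ⟨a, rfl⟩).symm, rfl⟩)
  | add p q hp hq =>
    rw [map_add, map_add, add_sub_add_comm]
    exact add_mem hp hq

noncomputable def coeffSumOn (C : Set (σ →₀ ℕ)) : MvPolynomial σ R →ₗ[R] R :=
  (basisMonomials σ R).constr R (C.indicator 1)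

theorem coeffSumOn_monomial (C : Set (σ →₀ ℕ)) (a : σ →₀ ℕ) (c : R) :
    coeffSumOn C (monomial a c) = c * C.indicator 1 a := by
  rw [monomial_eq_smul_monomial_one, map_smul, smul_eq_mul]
  exact congrArg (c * ·) ((basisMonomials σ R).constr_basis R _ a)

theorem coeffSumOn_monomial_one_mul (C : Set (σ →₀ ℕ)) (a : σ →₀ ℕ) (p : MvPolynomial σ R) :
    coeffSumOn C (monomial a 1 * p) = coeffSumOn ((a + ·) ⁻¹' C) p := by
  induction p using MvPolynomial.induction_on' with
  | monomial b c =>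
    rw [monomial_mul, one_mul, coeffSumOn_monomial, coeffSumOn_monomial]
    rfl
  | add p q hp hq => rw [mul_add, map_add, map_add, hp, hq]

/-- `C` is a union of connected components of the graph of moves `a + u — a + v` along the
binomials `monomial u 1 - monomial v 1 ∈ G`. -/
def IsMoveClosed (G : Set (MvPolynomial σ R)) (C : Set (σ →₀ ℕ)) : Prop :=
  ∀ a u v, monomial u 1 - monomial v 1 ∈ G → (a + u ∈ C ↔ a + v ∈ C)

theorem IsMoveClosed.preimage_add {G : Set (MvPolynomial σ R)} {C : Set (σ →₀ ℕ)}
    (hC : IsMoveClosed G C) (b : σ →₀ ℕ) : IsMoveClosed G ((b + ·) ⁻¹' C) := by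
  intro a u v huv
  simpa only [Set.mem_preimage, add_assoc] using hC (b + a) u v huv

theorem coeffSumOn_eq_zero_of_mem_span {G : Set (MvPolynomial σ R)}
    (hG : ∀ g ∈ G, ∃ u v, g = monomial u 1 - monomial v 1) {p : MvPolynomial σ R}
    (hp : p ∈ Ideal.span G) {C : Set (σ →₀ ℕ)} (hC : IsMoveClosed G C) :
    coeffSumOn C p = 0 := by
  induction hp using Submodule.span_induction generalizing C with
  | mem g hg =>
    obtain ⟨u, v, rfl⟩ := hG g hg
    have huv := hC 0 u v hg
    rw [zero_add, zero_add] at huv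
    by_cases hu : u ∈ C
    · simp [coeffSumOn_monomial, hu, huv.1 hu]
    · simp [coeffSumOn_monomial, hu, mt huv.2 hu]
  | zero => exact map_zero _
  | add p q _ _ hp hq => rw [map_add, hp hC, hq hC, add_zero]
  | smul c p _ hp =>
    induction c using MvPolynomial.induction_on' with
    | monomial a c =>
      rw [smul_eq_mul, monomial_eq_smul_monomial_one, smul_mul_assoc, map_smul,
        coeffSumOn_monomial_one_mul, hp (hC.preimage_add a), smul_zero]
    | add c c' hc hc' => rw [add_smul, map_add, hc, hc', add_zero]

theorem exists_move_of_monomial_sub_monomial_mem_span [Nontrivial R]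
    {G : Set (MvPolynomial σ R)} (hG : ∀ g ∈ G, ∃ u v, g = monomial u 1 - monomial v 1)
    {β ρ : σ →₀ ℕ} (hβρ : β ≠ ρ) (h : monomial β 1 - monomial ρ 1 ∈ Ideal.span G) :
    ∃ u v, u ≤ β ∧ u ≠ v ∧
      (monomial u 1 - monomial v 1 ∈ G ∨ monomial v 1 - monomial u 1 ∈ G) := by
  by_contra hno
  have hβ : IsMoveClosed G {β} := by
    intro a u v huv
    simp only [Set.mem_singleton_iff]
    constructor
    · rintro rfl
      by_contra hv
      exact hno ⟨u, v, le_add_self, fun h => hv (h ▸ rfl), Or.inl huv⟩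
    · rintro rfl
      by_contra hu
      exact hno ⟨v, u, le_add_self, fun h => hu (h ▸ rfl), Or.inr huv⟩
  have := coeffSumOn_eq_zero_of_mem_span hG h hβ
  simp [coeffSumOn_monomial, Set.indicator, hβρ.symm] at this

end MvPolynomial

namespace ToricHG

variable {K : Type} [Field K] {V : Type} {E : Finset (Finset V)}

variable (V E) in
noncomputable def multidegree : (Edge V E →₀ ℕ) →ₗ[ℕ] (V →₀ ℕ) :=
  Finsupp.linearCombination ℕ fun e => ∑ v ∈ e.1, Finsupp.single v 1

theorem phiH_monomial (a : Edge V E →₀ ℕ) :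
    phiH K V E (monomial a 1) = monomial (multidegree V E a) 1 := by
  rw [phiH, aeval_monomial, map_one, one_mul, multidegree, Finsupp.linearCombination_apply,
    monomial_finsupp_sum_index, C_1, one_mul]
  refine Finsupp.prod_congr fun e _ => ?_
  rw [← one_pow (M := K) (a e), ← monomial_pow, monomial_sum_one]
  rfl

theorem monomial_sub_monomial_mem_toricIdeal_iff {a b : Edge V E →₀ ℕ} :
    monomial a 1 - monomial b 1 ∈ toricIdeal K V E ↔ multidegree V E a = multidegree V E b := by
  rw [toricIdeal, RingHom.mem_ker, AlgHom.toRingHom_eq_coe, RingHom.coe_coe, map_sub,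
    phiH_monomial, phiH_monomial, sub_eq_zero, monomial_left_inj one_ne_zero]

variable [DecidableEq V]

theorem prod_map_X (M : Multiset (Edge V E)) :
    (M.map fun e => (X e : MvPolynomial (Edge V E) K)).prod = monomial M.toFinsupp 1 := by
  induction M using Multiset.induction_on with
  | empty => simp
  | cons e M ih =>
    rw [Multiset.map_cons, Multiset.prod_cons, ih, ← Multiset.singleton_add,
      Multiset.toFinsupp_add, Multiset.toFinsupp_singleton, X, monomial_mul, one_mul]

theorem binom_eq (B R : Multiset (Edge V E)) :
    binom K V E B R = monomial B.toFinsupp 1 - monomial R.toFinsupp 1 := by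
  rw [binom, prod_map_X, prod_map_X]

theorem degIn_cons (v : V) (e : Edge V E) (M : Multiset (Edge V E)) :
    degIn V E v (e ::ₘ M) = degIn V E v M + if v ∈ e.1 then 1 else 0 := by
  simp only [degIn, ← Multiset.countP_eq_card_filter, Multiset.countP_cons]

theorem degIn_add (v : V) (A B : Multiset (Edge V E)) :
    degIn V E v (A + B) = degIn V E v A + degIn V E v B := by
  simp only [degIn, Multiset.filter_add, Multiset.card_add]

theorem multidegree_toFinsupp_apply (M : Multiset (Edge V E)) (v : V) :
    multidegree V E M.toFinsupp v = degIn V E v M := by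
  induction M using Multiset.induction_on with
  | empty => simp [degIn]
  | cons e M ih =>
    rw [← Multiset.singleton_add, Multiset.toFinsupp_add, map_add, Finsupp.add_apply,
      Multiset.singleton_add, degIn_cons, ← ih, add_comm, Multiset.toFinsupp_singleton,
      multidegree, Finsupp.linearCombination_single, one_smul, Finsupp.finsetSum_apply]
    simp [Finsupp.single_apply]

theorem balanced_iff_multidegree_eq {B R : Multiset (Edge V E)} :
    Balanced V E B R ↔ multidegree V E B.toFinsupp = multidegree V E R.toFinsupp := by
  simp only [Balanced, Finsupp.ext_iff, multidegree_toFinsupp_apply]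

theorem binom_mem_toricIdeal_iff {B R : Multiset (Edge V E)} :
    binom K V E B R ∈ toricIdeal K V E ↔ Balanced V E B R := by
  rw [binom_eq, monomial_sub_monomial_mem_toricIdeal_iff, balanced_iff_multidegree_eq]

theorem Balanced.symm {B R : Multiset (Edge V E)} (h : Balanced V E B R) : Balanced V E R B :=
  fun v => (h v).symm

theorem Balanced.trans {A B C : Multiset (Edge V E)} (hAB : Balanced V E A B)
    (hBC : Balanced V E B C) : Balanced V E A C :=
  fun v => (hAB v).trans (hBC v)

theorem Balanced.tsub {B R B' R' : Multiset (Edge V E)} (h : Balanced V E B R)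
    (h' : Balanced V E B' R') (hB : B' ≤ B) (hR : R' ≤ R) : Balanced V E (B - B') (R - R') := by
  intro v
  have hBv := degIn_add v (B - B') B'
  have hRv := degIn_add v (R - R') R'
  rw [tsub_add_cancel_of_le hB] at hBv
  rw [tsub_add_cancel_of_le hR] at hRv
  have := h v
  have := h' v
  omega

theorem Balanced.eq_of_le (hE : ∀ e ∈ E, e.Nonempty) {A B : Multiset (Edge V E)}
    (h : Balanced V E A B) (hle : A ≤ B) : A = B := by
  by_contra hne
  obtain ⟨e, he⟩ := Multiset.exists_mem_of_ne_zero
    (mt tsub_eq_zero_iff_le.1 fun hBA => hne (le_antisymm hle hBA))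
  obtain ⟨v, hv⟩ := hE e.1 e.2
  have hpos : 0 < degIn V E v (B - A) :=
    Multiset.card_pos_iff_exists_mem.2 ⟨e, Multiset.mem_filter.2 ⟨he, hv⟩⟩
  have hsplit := degIn_add v A (B - A)
  rw [add_tsub_cancel_of_le hle] at hsplit
  have := h v
  omega

theorem binom_mem_span_graverSet {B R : Multiset (Edge V E)} (h : Balanced V E B R) :
    binom K V E B R ∈ Ideal.span (GraverSet K V E) := by
  induction hn : Multiset.card B + Multiset.card R using Nat.strong_induction_on
    generalizing B R with
  | _ n ih =>
    by_cases hBR : B = R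
    · simp [hBR, binom]
    by_cases hprim : Primitive V E B R
    · exact Ideal.subset_span ⟨B, R, hprim, hBR, rfl⟩
    obtain ⟨B', R', hne, h', hB, hR⟩ := not_not.1 fun hno => hprim ⟨h, hno⟩
    have hsplit : binom K V E B R = monomial (B - B').toFinsupp 1 * binom K V E B' R'
        + monomial R'.toFinsupp 1 * binom K V E (B - B') (R - R') := by
      simp only [binom_eq, mul_sub, monomial_mul, one_mul, ← Multiset.toFinsupp_add,
        tsub_add_cancel_of_le hB.le, add_tsub_cancel_of_le hR.le, add_comm R' (B - B')]
      abel
    have hB' := Multiset.card_lt_card hB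
    have hR' := Multiset.card_lt_card hR
    have hpos : 0 < Multiset.card B' + Multiset.card R' := by
      rw [Nat.pos_iff_ne_zero, Ne, Nat.add_eq_zero_iff, Multiset.card_eq_zero,
        Multiset.card_eq_zero]
      exact hne
    rw [hsplit]
    refine add_mem (Ideal.mul_mem_left _ _ (ih _ (by omega) h' rfl))
      (Ideal.mul_mem_left _ _ (ih _ ?_ (h.tsub h' hB.le hR.le) rfl))
    rw [Multiset.card_sub hB.le, Multiset.card_sub hR.le]
    omega

theorem span_graverSet_eq_toricIdeal :
    Ideal.span (GraverSet K V E) = toricIdeal K V E := by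
  refine le_antisymm (Ideal.span_le.2 ?_) fun p hp => ?_
  · rintro _ ⟨B, R, hprim, -, rfl⟩
    exact binom_mem_toricIdeal_iff.2 hprim.1
  have hker := ker_le_span_monomial_sub_monomial (phiH K V E).toLinearMap (multidegree V E)
    phiH_monomial (LinearMap.mem_ker.2 hp)
  refine (Submodule.span_le (p := (Ideal.span (GraverSet K V E)).restrictScalars K)).2 ?_ hker
  rintro _ ⟨a, b, hab, rfl⟩
  rw [← Finsupp.toMultiset_toFinsupp a, ← Finsupp.toMultiset_toFinsupp b, ← binom_eq]
  refine binom_mem_span_graverSet (balanced_iff_multidegree_eq.2 ?_)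
  simpa using hab

theorem degIn_eq_count_add_count {x : V} {e f : Edge V E} (hef : e ≠ f)
    (hx : ∀ g : Edge V E, x ∈ g.1 ↔ g = e ∨ g = f) (M : Multiset (Edge V E)) :
    degIn V E x M = M.count e + M.count f := by
  induction M using Multiset.induction_on with
  | empty => simp [degIn]
  | cons g M ih =>
    rw [degIn_cons, ih, Multiset.count_cons, Multiset.count_cons]
    by_cases hxg : x ∈ g.1
    · rcases (hx g).1 hxg with rfl | rfl <;> simp [hxg, hef, Ne.symm hef] <;> omega
    · have hge : e ≠ g := fun h => hxg ((hx g).2 (Or.inl h.symm))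
      have hgf : f ≠ g := fun h => hxg ((hx g).2 (Or.inr h.symm))
      simp [hxg, hge, hgf]

theorem exists_degIn_eq_count_add_count
    (hreg : ∀ v : V, (E.filter (fun e => v ∈ e)).card = 2) {e : Edge V E} {x : V}
    (hx : x ∈ e.1) : ∃ f : Edge V E, ∀ M, degIn V E x M = M.count e + M.count f := by
  obtain ⟨a, b, hab, hxE⟩ := Finset.card_eq_two.1 (hreg x)
  have hmem : ∀ s ∈ E, x ∈ s ↔ s = a ∨ s = b := fun s hs => by
    simpa [hs] using congrArg (s ∈ ·) hxE
  have ha : a ∈ E := (Finset.mem_filter.1 (hxE ▸ Finset.mem_insert_self a {b})).1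
  have hb : b ∈ E := (Finset.mem_filter.1 (hxE ▸ Finset.mem_insert_of_mem
    (Finset.mem_singleton_self b))).1
  rcases (hmem e.1 e.2).1 hx with hea | heb
  · refine ⟨⟨b, hb⟩, degIn_eq_count_add_count (fun h => hab (hea ▸ congrArg Subtype.val h))
      fun g => ?_⟩
    simp [Subtype.ext_iff, hea, hmem g.1 g.2]
  · refine ⟨⟨a, ha⟩,
      degIn_eq_count_add_count (fun h => hab (heb ▸ congrArg Subtype.val h).symm) fun g => ?_⟩
    simp [Subtype.ext_iff, heb, hmem g.1 g.2, or_comm]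

/-- At a vertex lying in the edges `e` and `f`, balance gives `C e - D e = D f - C f`, and the same
for `B, R`; with disjointness, `D e > 0` forces `D e = C f ≤ B f ≤ R e`. -/
theorem Balanced.right_le_of_left_le (hE : ∀ e ∈ E, e.Nonempty)
    (hreg : ∀ v : V, (E.filter (fun e => v ∈ e)).card = 2)
    {B R C D : Multiset (Edge V E)} (hBR : Balanced V E B R) (hBR' : B ∩ R = 0)
    (hCD : Balanced V E C D) (hCD' : C ∩ D = 0) (hCB : C ≤ B) : D ≤ R := by
  rw [Multiset.le_iff_count]
  intro e
  obtain ⟨x, hx⟩ := hE e.1 e.2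
  obtain ⟨f, hf⟩ := exists_degIn_eq_count_add_count hreg hx
  have hBR_x := hBR x
  have hCD_x := hCD x
  rw [hf, hf] at hBR_x hCD_x
  have hBR'_e := congrArg (Multiset.count e) hBR'
  have hBR'_f := congrArg (Multiset.count f) hBR'
  have hCD'_e := congrArg (Multiset.count e) hCD'
  have hCD'_f := congrArg (Multiset.count f) hCD'
  simp only [Multiset.count_inter, Multiset.count_zero] at hBR'_e hBR'_f hCD'_e hCD'_f
  have hCB_f := Multiset.le_iff_count.1 hCB f
  omega

theorem Primitive.inter_eq_zero (hE : ∀ e ∈ E, e.Nonempty) {B R : Multiset (Edge V E)}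
    (h : Primitive V E B R) (hBR : B ≠ R) : B ∩ R = 0 := by
  by_contra hS
  refine h.2 ⟨B ∩ R, B ∩ R, fun h0 => hS h0.1, fun v => rfl, ?_, ?_⟩
  · refine lt_of_le_of_ne Multiset.inter_le_left fun hB => hBR ?_
    exact h.1.eq_of_le hE (hB ▸ Multiset.inter_le_right)
  · refine lt_of_le_of_ne Multiset.inter_le_right fun hR => hBR ?_
    exact (h.1.symm.eq_of_le hE (hR ▸ Multiset.inter_le_left)).symm

theorem Primitive.eq_of_le_of_inter_eq_zero (hE : ∀ e ∈ E, e.Nonempty)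
    (hreg : ∀ v : V, (E.filter (fun e => v ∈ e)).card = 2) {B R C D : Multiset (Edge V E)}
    (h : Primitive V E B R) (hBR : B ≠ R) (hCD : Balanced V E C D) (hCD' : C ∩ D = 0)
    (hCB : C ≤ B) (hC : C ≠ 0) : C = B ∧ D = R := by
  have hDR := Balanced.right_le_of_left_le hE hreg h.1 (h.inter_eq_zero hE hBR) hCD hCD' hCB
  have hCB_or : C = B ∨ D = R := by
    by_contra! hne
    exact h.2 ⟨C, D, fun h0 => hC h0.1, hCD, lt_of_le_of_ne hCB hne.1, lt_of_le_of_ne hDR hne.2⟩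
  rcases hCB_or with rfl | rfl
  · exact ⟨rfl, (hCD.symm.trans h.1).eq_of_le hE hDR⟩
  · exact ⟨(hCD.trans h.1.symm).eq_of_le hE hCB, rfl⟩

theorem Primitive.eq_of_le (hE : ∀ e ∈ E, e.Nonempty)
    (hreg : ∀ v : V, (E.filter (fun e => v ∈ e)).card = 2) {B R C D : Multiset (Edge V E)}
    (h : Primitive V E B R) (hBR : B ≠ R) (hCD : Balanced V E C D) (hCB : C ≤ B)
    (hne : C ≠ D) : C = B ∧ D = R := by
  set W := C ∩ D
  have hW : Balanced V E (C - W) (D - W) :=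
    hCD.tsub (fun _ => rfl) Multiset.inter_le_left Multiset.inter_le_right
  have hW' : (C - W) ∩ (D - W) = 0 := by
    ext g
    simp only [W, Multiset.count_inter, Multiset.count_sub, Multiset.count_zero]
    omega
  have hCW : C - W ≠ 0 := by
    intro h0
    have hDW : 0 = D - W := (h0 ▸ hW).eq_of_le hE (Multiset.zero_le _)
    exact hne (le_antisymm (tsub_eq_zero_iff_le.1 h0 |>.trans Multiset.inter_le_right)
      (tsub_eq_zero_iff_le.1 hDW.symm |>.trans Multiset.inter_le_left))
  obtain ⟨hCB', hDR'⟩ :=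
    h.eq_of_le_of_inter_eq_zero hE hreg hBR hW hW' (tsub_le_self.trans hCB) hCW
  have hW0 : W = 0 := by
    ext g
    have hg := congrArg (Multiset.count g) hCB'
    have hCB_g := Multiset.le_iff_count.1 hCB g
    simp only [W, Multiset.count_inter, Multiset.count_sub, Multiset.count_zero] at hg ⊢
    omega
  rw [hW0, tsub_zero] at hCB' hDR'
  exact ⟨hCB', hDR'⟩

theorem indispensable_of_mem_graverSet (hE : ∀ e ∈ E, e.Nonempty)
    (hreg : ∀ v : V, (E.filter (fun e => v ∈ e)).card = 2) {f : MvPolynomial (Edge V E) K}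
    (hf : f ∈ GraverSet K V E) : Indispensable K V E f := by
  obtain ⟨B, R, h, hBR, rfl⟩ := hf
  intro G hGbin hGspan
  have hG : ∀ g ∈ G, ∃ u v, g = monomial u 1 - monomial v 1 := fun g hg =>
    let ⟨u, v, _, hg⟩ := hGbin g hg
    ⟨u, v, hg⟩
  have hmem : monomial B.toFinsupp 1 - monomial R.toFinsupp 1 ∈ Ideal.span G := by
    rw [hGspan, ← binom_eq]
    exact binom_mem_toricIdeal_iff.2 h.1
  obtain ⟨u, v, hu, huv, huvG⟩ := exists_move_of_monomial_sub_monomial_mem_span hG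
    (Multiset.toFinsupp.injective.ne hBR) hmem
  obtain ⟨C, rfl⟩ := Multiset.toFinsupp.surjective u
  obtain ⟨D, rfl⟩ := Multiset.toFinsupp.surjective v
  have hCD : Balanced V E C D := by
    rw [← binom_mem_toricIdeal_iff (K := K), binom_eq, ← hGspan]
    rcases huvG with hg | hg
    · exact Ideal.subset_span hg
    · simpa using neg_mem (Ideal.subset_span hg)
  obtain ⟨rfl, rfl⟩ := h.eq_of_le hE hreg hBR hCD
    (Finsupp.orderIsoMultiset.symm.le_iff_le.1 hu)
    (mt (congrArg _) huv)
  rw [binom_eq, neg_sub]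
  exact huvG

theorem graver_unique_minimal_of_two_regular_general
    (K : Type) [Field K] (V : Type) [DecidableEq V]
    (E : Finset (Finset V)) (hE : ∀ e ∈ E, e.Nonempty)
    (hreg : ∀ v : V, (E.filter (fun e => v ∈ e)).card = 2) :
    Ideal.span (GraverSet K V E) = toricIdeal K V E ∧
      ∀ f ∈ GraverSet K V E, Indispensable K V E f :=
  ⟨span_graverSet_eq_toricIdeal, fun _ hf => indispensable_of_mem_graverSet hE hreg hf⟩

/-- For a `2`-regular `k`-uniform hypergraph `H`, the Graver basis generates
`I_H` and each of its elements is indispensable; hence it is the unique minimal binomial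
generating set of `I_H`. -/
theorem graver_unique_minimal_of_two_regular
    (K : Type) [Field K] (V : Type) [Fintype V] [DecidableEq V]
    (k : ℕ) (E : Finset (Finset V)) (hE : ∀ e ∈ E, e.Nonempty)
    (hunif : ∀ e ∈ E, e.card = k)
    (hreg : ∀ v : V, (E.filter (fun e => v ∈ e)).card = 2) :
    Ideal.span (GraverSet K V E) = toricIdeal K V E ∧
      ∀ f ∈ GraverSet K V E, Indispensable K V E f :=
  graver_unique_minimal_of_two_regular_general K V E hE hreg

end ToricHG
end

section
/- Fix a field k and integers r, c ≥ 2. The toric ideal I(2,r,c) of the no-3-way-interaction model on 2×r×c contingency tables contains a primitive binomial of total degree 2·min(r,c), namely the binomial arising from a cycle of length 2·min(r,c) in the complete bipartite graph K_{r,c} (a primitive binomial of a toric ideal is a binomial u − v in the ideal such that there is no other nonzero binomial u' − v' in the ideal with u' dividing u and v' dividing v). -/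
/-!
Let `m = min r c`. Colour the edges of a `2m`-cycle of `K_{r,c}` alternately `0, 1`, and let `u`,
resp. `v`, be the `0/1` table that puts each edge `(j, k)` in the layer given by its colour, resp.
by the other colour. The tables `u` and `v` have the same line sums, which is exactly the
condition for `t^u - t^v` to lie in the toric ideal.

If `t^u' - t^v'` also lies in the ideal with `u' ≤ u` and `v' ≤ v`, every line of the table meets
the support of `u`, resp. `v`, in at most one cell, so the equality of line sums says that `u'`
and `v'` take the same value on any two edges sharing a vertex. The cycle being connected, that
value is constant, hence `0` or `1`, and `u' ≠ v'` excludes `0`.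
-/

open MvPolynomial

namespace No3Way

variable (K : Type) [Field K]

/-- The monomial map `t_{ijk} ↦ u_{ij} v_{ik} w_{jk}` of the no-`3`-way-interaction model on
`a × r × c` contingency tables. -/
noncomputable def phi3 (a r c : ℕ) :
    MvPolynomial (Fin a × Fin r × Fin c) K →ₐ[K]
      MvPolynomial ((Fin a × Fin r) ⊕ (Fin a × Fin c) ⊕ (Fin r × Fin c)) K :=
  aeval (fun p : Fin a × Fin r × Fin c =>
    X (Sum.inl (p.1, p.2.1)) * X (Sum.inr (Sum.inl (p.1, p.2.2))) *
      X (Sum.inr (Sum.inr (p.2.1, p.2.2))))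

/-- The toric ideal `I(a,r,c)` of the no-`3`-way-interaction model on `a × r × c` tables. -/
noncomputable def I3 (a r c : ℕ) : Ideal (MvPolynomial (Fin a × Fin r × Fin c) K) :=
  RingHom.ker (phi3 K a r c).toRingHom

/-- A binomial: the difference of two distinct monic monomials. -/
def IsBinomial {σ : Type} (f : MvPolynomial σ K) : Prop :=
  ∃ a b : σ →₀ ℕ, a ≠ b ∧ f = monomial a 1 - monomial b 1

end No3Way

namespace No3Way

/-- A primitive binomial of the ideal `I`: a binomial `u - v ∈ I` such that no other nonzero
binomial `u' - v' ∈ I` satisfies `u' ∣ u` and `v' ∣ v`. -/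
def PrimitiveBinomial {σ : Type} (K : Type) [Field K]
    (I : Ideal (MvPolynomial σ K)) (f : MvPolynomial σ K) : Prop :=
  ∃ a b : σ →₀ ℕ, a ≠ b ∧ f = MvPolynomial.monomial a 1 - MvPolynomial.monomial b 1 ∧
    ∀ a' b' : σ →₀ ℕ, a' ≠ b' →
      (MvPolynomial.monomial a' 1 - MvPolynomial.monomial b' 1 : MvPolynomial σ K) ∈ I →
      a' ≤ a → b' ≤ b → a' = a ∧ b' = b

end No3Way

theorem Finsupp.exists_le_and_eq_mapDomain_of_le {α β M : Type*} [AddCommMonoid M]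
    [PartialOrder M] [CanonicallyOrderedAdd M] {f : α → β} (hf : f.Injective) {v : α →₀ M}
    {d : β →₀ M} (hd : d ≤ v.mapDomain f) :
    ∃ w ≤ v, d = w.mapDomain f := by
  classical
  have hsupp : (d.support : Set β) ⊆ Set.range f := fun b hb => by
    obtain ⟨a, -, rfl⟩ :=
      Finset.mem_image.1 (Finsupp.mapDomain_support (Finsupp.support_mono hd hb))
    exact ⟨a, rfl⟩
  refine ⟨d.comapDomain f hf.injOn, fun a => ?_, (Finsupp.mapDomain_comapDomain f hf d hsupp).symm⟩
  simpa [hf] using hd (f a)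

theorem apply_eq_apply_of_apply_finRotate_eq {α : Type*} {m : ℕ} {g : Fin m → α}
    (hg : ∀ s, g (finRotate m s) = g s) (s t : Fin m) : g s = g t := by
  cases m with
  | zero => exact s.elim0
  | succ n =>
    have h0 : ∀ s : Fin (n + 1), g s = g 0 := Fin.induction rfl fun i ih => by
      rw [← ih, ← hg i.castSucc, finRotate_apply, Fin.coeSucc_eq_succ]
    rw [h0 s, h0 t]

namespace No3Way

section Marginals

variable {a r c : ℕ}

/- `phi3` sends `t_p` to the product of the variables indexed by `uIndex p`, `vIndex p` and
`wIndex p`, i.e. by the three lines of the table through the cell `p`; so `marginals u` records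
the line sums of the table `u`. -/
def uIndex (p : Fin a × Fin r × Fin c) : (Fin a × Fin r) ⊕ (Fin a × Fin c) ⊕ (Fin r × Fin c) :=
  Sum.inl (p.1, p.2.1)

def vIndex (p : Fin a × Fin r × Fin c) : (Fin a × Fin r) ⊕ (Fin a × Fin c) ⊕ (Fin r × Fin c) :=
  Sum.inr (Sum.inl (p.1, p.2.2))

def wIndex (p : Fin a × Fin r × Fin c) : (Fin a × Fin r) ⊕ (Fin a × Fin c) ⊕ (Fin r × Fin c) :=
  Sum.inr (Sum.inr (p.2.1, p.2.2))

noncomputable def cellMarginal (p : Fin a × Fin r × Fin c) :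
    (Fin a × Fin r) ⊕ (Fin a × Fin c) ⊕ (Fin r × Fin c) →₀ ℕ :=
  Finsupp.single (uIndex p) 1 + Finsupp.single (vIndex p) 1 + Finsupp.single (wIndex p) 1

noncomputable def marginals :
    (Fin a × Fin r × Fin c →₀ ℕ) →ₗ[ℕ] ((Fin a × Fin r) ⊕ (Fin a × Fin c) ⊕ (Fin r × Fin c) →₀ ℕ) :=
  Finsupp.linearCombination ℕ cellMarginal

theorem phi3_monomial_one (K : Type) [Field K] (u : Fin a × Fin r × Fin c →₀ ℕ) :
    phi3 K a r c (monomial u 1) = monomial (marginals u) 1 := by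
  have hX : ∀ p, (X (uIndex p) * X (vIndex p) * X (wIndex p) :
      MvPolynomial ((Fin a × Fin r) ⊕ (Fin a × Fin c) ⊕ (Fin r × Fin c)) K) =
        monomial (cellMarginal p) 1 := by
    simp [X, monomial_mul, cellMarginal]
  rw [phi3, aeval_monomial, marginals, Finsupp.linearCombination_apply, monomial_finsupp_sum_index]
  simp only [map_one, one_mul]
  exact Finsupp.prod_congr fun p _ => by
    rw [← uIndex, ← vIndex, ← wIndex, hX, monomial_pow, one_pow]

theorem monomial_sub_monomial_mem_I3_iff (K : Type) [Field K]
    (u v : Fin a × Fin r × Fin c →₀ ℕ) :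
    (monomial u 1 - monomial v 1 : MvPolynomial _ K) ∈ I3 K a r c ↔ marginals u = marginals v := by
  rw [I3, RingHom.mem_ker, AlgHom.toRingHom_eq_coe, RingHom.coe_coe, map_sub, sub_eq_zero,
    phi3_monomial_one, phi3_monomial_one]
  exact (monomial_left_injective one_ne_zero).eq_iff

variable {ι : Type*} [Fintype ι] {f : ι → Fin a × Fin r × Fin c}

theorem marginals_mapDomain (x : ι →₀ ℕ) :
    marginals (x.mapDomain f) = ∑ e, x e • cellMarginal (f e) := by
  rw [marginals, Finsupp.linearCombination_mapDomain, Finsupp.linearCombination_apply,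
    Finsupp.sum_fintype _ _ (by simp)]
  rfl

theorem marginals_mapDomain_apply_of_injective
    {L : Fin a × Fin r × Fin c → (Fin a × Fin r) ⊕ (Fin a × Fin c) ⊕ (Fin r × Fin c)}
    (hL : ∀ p p', cellMarginal p (L p') = if L p = L p' then 1 else 0) (hf : (L ∘ f).Injective)
    (x : ι →₀ ℕ) (e : ι) :
    marginals (x.mapDomain f) (L (f e)) = x e := by
  classical
  rw [marginals_mapDomain, Finsupp.finsetSum_apply, Finset.sum_eq_single e]
  · simp [hL]
  · intro e' _ he'
    rw [Finsupp.smul_apply, hL, if_neg (show L (f e') ≠ L (f e) from hf.ne he'), smul_zero]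
  · simp

theorem cellMarginal_uIndex (p p' : Fin a × Fin r × Fin c) :
    cellMarginal p (uIndex p') = if uIndex p = uIndex p' then 1 else 0 := by
  simp [cellMarginal, uIndex, vIndex, wIndex, Finsupp.single_apply]

theorem cellMarginal_vIndex (p p' : Fin a × Fin r × Fin c) :
    cellMarginal p (vIndex p') = if vIndex p = vIndex p' then 1 else 0 := by
  simp [cellMarginal, uIndex, vIndex, wIndex, Finsupp.single_apply]

theorem cellMarginal_wIndex (p p' : Fin a × Fin r × Fin c) :
    cellMarginal p (wIndex p') = if wIndex p = wIndex p' then 1 else 0 := by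
  simp [cellMarginal, uIndex, vIndex, wIndex, Finsupp.single_apply]

theorem apply_eq_apply_of_marginals_mapDomain_eq {g : ι → Fin a × Fin r × Fin c}
    {x y : ι →₀ ℕ} (h : marginals (x.mapDomain f) = marginals (y.mapDomain g))
    {L : Fin a × Fin r × Fin c → (Fin a × Fin r) ⊕ (Fin a × Fin c) ⊕ (Fin r × Fin c)}
    (hL : ∀ p p', cellMarginal p (L p') = if L p = L p' then 1 else 0)
    (hf : (L ∘ f).Injective) (hg : (L ∘ g).Injective) {e e' : ι} (he : L (f e) = L (g e')) :
    x e = y e' := by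
  rw [← marginals_mapDomain_apply_of_injective hL hf x e,
    ← marginals_mapDomain_apply_of_injective hL hg y e', ← he, h]

end Marginals

section Cycle

variable {a r c m : ℕ}

/- For injective `j`, `k`, the pairs `(j s, k s)` and `(j s, k (s + 1))` are the edges of the
`2m`-cycle `k 0 - j 0 - k 1 - j 1 - ⋯ - j (m - 1) - k 0` in `K_{r,c}`; `e = (s, t)` is the edge
`(j s, k (s + t))` (indices mod `m`), and `cycleCell ℓ j k e` places it in layer `ℓ t`.
Recolouring by `ℓ ∘ Fin.rev` swaps the two layers. -/
def cycleCell (ℓ : Fin 2 → Fin a) (j : Fin m → Fin r) (k : Fin m → Fin c) (e : Fin m × Fin 2) :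
    Fin a × Fin r × Fin c :=
  (ℓ e.2, j e.1, k ((finRotate m ^ (e.2 : ℕ)) e.1))

noncomputable def cycleExponent (ℓ : Fin 2 → Fin a) (j : Fin m → Fin r) (k : Fin m → Fin c) :
    Fin a × Fin r × Fin c →₀ ℕ :=
  (Finsupp.equivFunOnFinite.symm 1).mapDomain (cycleCell ℓ j k)

noncomputable def cycleBinomial (K : Type) [Field K] (ℓ : Fin 2 → Fin a) (j : Fin m → Fin r)
    (k : Fin m → Fin c) : MvPolynomial (Fin a × Fin r × Fin c) K :=
  monomial (cycleExponent ℓ j k) 1 - monomial (cycleExponent (ℓ ∘ Fin.rev) j k) 1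

variable {ℓ : Fin 2 → Fin a} {j : Fin m → Fin r} {k : Fin m → Fin c}

theorem uIndex_comp_cycleCell_injective (hℓ : ℓ.Injective) (hj : j.Injective) :
    (uIndex ∘ cycleCell ℓ j k).Injective := by
  rintro ⟨s, t⟩ ⟨s', t'⟩ h
  simp_all [uIndex, cycleCell, hℓ.eq_iff, hj.eq_iff]

theorem vIndex_comp_cycleCell_injective (hℓ : ℓ.Injective) (hk : k.Injective) :
    (vIndex ∘ cycleCell ℓ j k).Injective := by
  rintro ⟨s, t⟩ ⟨s', t'⟩ h
  simp only [Function.comp_apply, vIndex, cycleCell, Sum.inr.injEq, Sum.inl.injEq, Prod.mk.injEq,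
    hℓ.eq_iff, hk.eq_iff] at h
  obtain ⟨rfl, h⟩ := h
  rw [(finRotate m ^ (t : ℕ)).injective h]

theorem wIndex_comp_cycleCell_injective (hm : 2 ≤ m) (hj : j.Injective) (hk : k.Injective) :
    (wIndex ∘ cycleCell ℓ j k).Injective := by
  rintro ⟨s, t⟩ ⟨s', t'⟩ h
  simp only [Function.comp_apply, wIndex, cycleCell, Sum.inr.injEq, Prod.mk.injEq, hj.eq_iff,
    hk.eq_iff] at h
  obtain ⟨rfl, h⟩ := h
  have hs : finRotate m s ≠ s :=
    Equiv.Perm.mem_support.1 (by simp [support_finRotate_of_le hm])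
  fin_cases t <;> fin_cases t' <;> simp_all [eq_comm]

theorem marginals_cycleExponent_rev :
    marginals (cycleExponent (ℓ ∘ Fin.rev) j k) = marginals (cycleExponent ℓ j k) := by
  have hrot : ∀ i, ∑ s, Finsupp.single (vIndex (ℓ i, j s, k (finRotate m s))) 1 =
      ∑ s, Finsupp.single (vIndex (ℓ i, j s, k s)) 1 :=
    fun i => Equiv.sum_comp (finRotate m) fun s => Finsupp.single (vIndex (ℓ i, j s, k s)) 1
  simp only [vIndex] at hrot
  have hrev0 : Fin.rev (0 : Fin 2) = 1 := rfl
  have hrev1 : Fin.rev (1 : Fin 2) = 0 := rfl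
  simp only [cycleExponent, marginals_mapDomain, Finsupp.coe_equivFunOnFinite_symm, Pi.one_apply,
    one_smul, cellMarginal, Finset.sum_add_distrib, Fintype.sum_prod_type, Fin.sum_univ_two,
    cycleCell, uIndex, vIndex, wIndex, Function.comp_apply, hrev0, hrev1, Fin.val_zero,
    Fin.val_one, pow_zero, pow_one, Equiv.Perm.coe_one, id_eq, hrot]
  abel

theorem cycleBinomial_mem_I3 (K : Type) [Field K] : cycleBinomial K ℓ j k ∈ I3 K a r c :=
  (monomial_sub_monomial_mem_I3_iff K _ _).2 marginals_cycleExponent_rev.symm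

theorem degree_cycleExponent : (cycleExponent ℓ j k).degree = 2 * m := by
  rw [cycleExponent, Finsupp.degree_mapDomain, Finsupp.degree_eq_sum]
  simp [mul_comm]

theorem cycleExponent_ne_cycleExponent_rev (hm : 2 ≤ m) (hℓ : ℓ.Injective) (hj : j.Injective)
    (hk : k.Injective) : cycleExponent ℓ j k ≠ cycleExponent (ℓ ∘ Fin.rev) j k := by
  let e : Fin m × Fin 2 := (⟨0, by omega⟩, 0)
  have hA : cycleExponent ℓ j k (cycleCell ℓ j k e) = 1 := by
    simp [cycleExponent, Finsupp.mapDomain_apply (uIndex_comp_cycleCell_injective hℓ hj).of_comp]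
  have hB : cycleExponent (ℓ ∘ Fin.rev) j k (cycleCell ℓ j k e) = 0 := by
    refine Finsupp.mapDomain_of_notMem_range _ _ fun ⟨e', he'⟩ => ?_
    have hw := congrArg wIndex he'
    obtain rfl : e' = e := wIndex_comp_cycleCell_injective (ℓ := ℓ) hm hj hk hw
    exact absurd (hℓ (congrArg Prod.fst he')) (show Fin.rev (0 : Fin 2) ≠ 0 by decide)
  intro h
  rw [h, hB] at hA
  exact zero_ne_one hA

theorem totalDegree_cycleBinomial (K : Type) [Field K] (hm : 2 ≤ m) (hℓ : ℓ.Injective)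
    (hj : j.Injective) (hk : k.Injective) : (cycleBinomial K ℓ j k).totalDegree = 2 * m :=
  ((isHomogeneous_monomial 1 degree_cycleExponent).sub
    (isHomogeneous_monomial 1 degree_cycleExponent)).totalDegree <| sub_ne_zero.2 fun h =>
      cycleExponent_ne_cycleExponent_rev hm hℓ hj hk (monomial_left_injective one_ne_zero h)

theorem eq_and_forall_eq_of_marginals_eq (hm : 2 ≤ m) (hℓ : ℓ.Injective) (hj : j.Injective)
    (hk : k.Injective) {x y : Fin m × Fin 2 →₀ ℕ}
    (h : marginals (x.mapDomain (cycleCell ℓ j k)) =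
      marginals (y.mapDomain (cycleCell (ℓ ∘ Fin.rev) j k))) :
    x = y ∧ ∀ e e', x e = x e' := by
  have hℓ' : (ℓ ∘ Fin.rev).Injective := hℓ.comp Fin.rev_injective
  have hu : ∀ s t, x (s, t) = y (s, Fin.rev t) := fun s t =>
    apply_eq_apply_of_marginals_mapDomain_eq h cellMarginal_uIndex
      (uIndex_comp_cycleCell_injective hℓ hj) (uIndex_comp_cycleCell_injective hℓ' hj)
      (by simp [uIndex, cycleCell])
  have hv : ∀ s, x (finRotate m s, 0) = y (s, 1) := fun s =>
    apply_eq_apply_of_marginals_mapDomain_eq h cellMarginal_vIndex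
      (vIndex_comp_cycleCell_injective hℓ hk) (vIndex_comp_cycleCell_injective hℓ' hk)
      (by simp [vIndex, cycleCell])
  have hw : ∀ e, x e = y e := fun e =>
    apply_eq_apply_of_marginals_mapDomain_eq h cellMarginal_wIndex
      (wIndex_comp_cycleCell_injective hm hj hk) (wIndex_comp_cycleCell_injective hm hj hk) rfl
  -- the row through `(s, 0)` and the column through `(finRotate m s, 0)` meet the opposite
  -- colouring in the same edge `(s, 1)`
  have hx0 : ∀ s s', x (s, 0) = x (s', 0) :=
    apply_eq_apply_of_apply_finRotate_eq (g := fun s => x (s, 0)) fun s =>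
      (hv s).trans (hu s 0).symm
  have hx : ∀ s t, x (s, t) = x (s, 0) := by
    intro s t
    fin_cases t
    · rfl
    · exact (hu s 1).trans (hw (s, 0)).symm
  exact ⟨Finsupp.ext hw, fun ⟨s, t⟩ ⟨s', t'⟩ => by rw [hx, hx s', hx0]⟩

theorem primitiveBinomial_cycleBinomial (K : Type) [Field K] (hm : 2 ≤ m) (hℓ : ℓ.Injective)
    (hj : j.Injective) (hk : k.Injective) :
    PrimitiveBinomial K (I3 K a r c) (cycleBinomial K ℓ j k) := by
  have hcell : ∀ {ℓ : Fin 2 → Fin a}, ℓ.Injective → (cycleCell ℓ j k).Injective :=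
    fun hℓ => (uIndex_comp_cycleCell_injective hℓ hj).of_comp
  refine ⟨_, _, cycleExponent_ne_cycleExponent_rev hm hℓ hj hk, rfl,
    fun a' b' hne hmem ha hb => ?_⟩
  obtain ⟨x, hx, rfl⟩ := Finsupp.exists_le_and_eq_mapDomain_of_le (hcell hℓ) ha
  obtain ⟨y, -, rfl⟩ :=
    Finsupp.exists_le_and_eq_mapDomain_of_le (hcell (hℓ.comp Fin.rev_injective)) hb
  obtain ⟨rfl, hconst⟩ := eq_and_forall_eq_of_marginals_eq hm hℓ hj hk
    ((monomial_sub_monomial_mem_I3_iff K _ _).1 hmem)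
  obtain ⟨e₀, he₀⟩ : ∃ e, x e ≠ 0 := by
    by_contra! h
    obtain rfl : x = 0 := Finsupp.ext h
    exact hne rfl
  obtain rfl : x = Finsupp.equivFunOnFinite.symm 1 := Finsupp.ext fun e => by
    have := hx e
    simp only [Finsupp.coe_equivFunOnFinite_symm, Pi.one_apply] at this ⊢
    rw [hconst e e₀] at this ⊢
    omega
  exact ⟨rfl, rfl⟩

end Cycle

/-- For `r, c ≥ 2` the toric ideal `I(2,r,c)` of the no-`3`-way-interaction
model on `2 × r × c` tables contains a primitive binomial of total degree `2 · min r c`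
(the binomial arising from a cycle of length `2 · min r c` in `K_{r,c}`). -/
theorem exists_primitive_binomial_of_degree_two_min
    (K : Type) [Field K] (r c : ℕ) (hr : 2 ≤ r) (hc : 2 ≤ c) :
    ∃ f : MvPolynomial (Fin 2 × Fin r × Fin c) K,
      f ∈ I3 K 2 r c ∧ PrimitiveBinomial K (I3 K 2 r c) f ∧
        f.totalDegree = 2 * min r c := by
  have hm : 2 ≤ min r c := le_min hr hc
  have hj := Fin.castLE_injective (min_le_left r c)
  have hk := Fin.castLE_injective (min_le_right r c)
  exact ⟨cycleBinomial K id (Fin.castLE (min_le_left r c)) (Fin.castLE (min_le_right r c)),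
    cycleBinomial_mem_I3 K, primitiveBinomial_cycleBinomial K hm Function.injective_id hj hk,
    totalDegree_cycleBinomial K hm Function.injective_id hj hk⟩

end No3Way
end

section
/- Fix a field k. The toric ideal I(2,2,2) of the no-3-way-interaction model on 2×2×2 contingency tables is the principal ideal generated by the single degree-4 binomial t_{111}t_{122}t_{212}t_{221} − t_{112}t_{121}t_{211}t_{222} (indices i,j,k ∈ {1,2}). -/
open MvPolynomial

/-!
The map `phi3` sends a monomial `t^x` to the monomial whose exponent is the vector of line sums
(margins) of the table `x`, so its kernel is spanned by the binomials `t^x - t^y` with `x` and `y`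
in the same fibre: subtracting from a kernel element `f` the polynomial obtained by moving every
exponent to a fixed representative of its fibre leaves a combination of such binomials, while the
subtracted polynomial factors through `phi3 f = 0`.

For `2 × 2 × 2` tables the integer tables with vanishing line sums are the multiples of the table
`(-1)^(i+j+k)`. Hence two tables with equal margins are `z + m • e` and `z + m • o`, with `e` and
`o` the indicator tables of the cells with even and odd coordinate sum, and
`t^x - t^y = t^z ((t^e)^m - (t^o)^m)` is divisible by `t^e - t^o`.
-/

namespace AddMonoidAlgebra

variable {R M N O : Type*}

theorem mapDomain_comp [Semiring R] (f : M → N) (g : N → O) (x : AddMonoidAlgebra R M) :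
    mapDomain (g ∘ f) x = mapDomain g (mapDomain f x) := by
  ext; simp [Finsupp.mapDomain_comp]

theorem mem_ideal_of_mapDomain_eq_zero [Ring R] [AddMonoid M] (e : M → N)
    (I : Ideal (AddMonoidAlgebra R M)) (hI : ∀ a b, e a = e b → single a 1 - single b 1 ∈ I)
    {f : AddMonoidAlgebra R M} (hf : mapDomain e f = 0) : f ∈ I := by
  set r := Function.invFun e ∘ e
  have hr (a : M) : e (r a) = e a := Function.invFun_eq ⟨a, rfl⟩
  have hrf : mapDomain r f = 0 := by rw [mapDomain_comp, hf, mapDomain_zero]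
  have hdiff : f - mapDomain r f = f.coeff.sum fun a c => single a c - single (r a) c := by
    conv_lhs => rw [← sum_coeff_single f, mapDomain_sum]
    simp only [mapDomain_single, Finsupp.sum_sub]
  have hterm (a : M) (c : R) : single a c - single (r a) c ∈ I := by
    rw [show single a c - single (r a) c = single 0 c * (single a 1 - single (r a) 1) by
      simp [mul_sub, single_mul_single]]
    exact I.mul_mem_left _ (hI _ _ (hr a).symm)
  rw [← sub_zero f, ← hrf, hdiff]
  exact Ideal.sum_mem _ fun a _ => hterm a _

end AddMonoidAlgebra

namespace MvPolynomial

variable {σ τ R : Type*}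

theorem aeval_monomial_eq_mapDomainAlgHom [CommSemiring R] (w : σ → τ →₀ ℕ) :
    aeval (fun i => monomial (w i) (1 : R)) =
      AddMonoidAlgebra.mapDomainAlgHom R R (Finsupp.weight w) := by
  refine algHom_ext fun i => ?_
  rw [aeval_X, AddMonoidAlgebra.mapDomainAlgHom_apply, X, ← single_eq_monomial,
    ← single_eq_monomial, AddMonoidAlgebra.mapDomain_single, Finsupp.weight_single, one_smul]

theorem ker_aeval_monomial_le [CommRing R] (w : σ → τ →₀ ℕ) (I : Ideal (MvPolynomial σ R))
    (hI : ∀ a b, Finsupp.weight w a = Finsupp.weight w b → monomial a (1 : R) - monomial b 1 ∈ I) :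
    RingHom.ker (aeval fun i => monomial (w i) (1 : R)) ≤ I := by
  intro f hf
  rw [RingHom.mem_ker, aeval_monomial_eq_mapDomainAlgHom,
    AddMonoidAlgebra.mapDomainAlgHom_apply] at hf
  exact AddMonoidAlgebra.mem_ideal_of_mapDomain_eq_zero _ I hI hf

end MvPolynomial

namespace No3Way

noncomputable def cellDegree (a r c : ℕ) (p : Fin a × Fin r × Fin c) :
    (Fin a × Fin r) ⊕ (Fin a × Fin c) ⊕ (Fin r × Fin c) →₀ ℕ :=
  Finsupp.single (.inl (p.1, p.2.1)) 1 + Finsupp.single (.inr (.inl (p.1, p.2.2))) 1 +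
    Finsupp.single (.inr (.inr (p.2.1, p.2.2))) 1

theorem phi3_eq_aeval (K : Type) [Field K] (a r c : ℕ) :
    phi3 K a r c = aeval fun p => monomial (cellDegree a r c p) 1 := by
  simp only [phi3, cellDegree, X, monomial_mul, mul_one]

section Margins

variable {a r c : ℕ} (x : Fin a × Fin r × Fin c →₀ ℕ)

theorem weight_cellDegree_inl (i : Fin a) (j : Fin r) :
    Finsupp.weight (cellDegree a r c) x (.inl (i, j)) = ∑ k, x (i, j, k) := by
  rw [Finsupp.weight_apply, Finsupp.sum_fintype _ _ (by simp)]
  simp [cellDegree, Finsupp.single_apply, Fintype.sum_prod_type, ite_and]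

theorem weight_cellDegree_inr_inl (i : Fin a) (k : Fin c) :
    Finsupp.weight (cellDegree a r c) x (.inr (.inl (i, k))) = ∑ j, x (i, j, k) := by
  rw [Finsupp.weight_apply, Finsupp.sum_fintype _ _ (by simp)]
  simp [cellDegree, Finsupp.single_apply, Fintype.sum_prod_type, ite_and]

theorem weight_cellDegree_inr_inr (j : Fin r) (k : Fin c) :
    Finsupp.weight (cellDegree a r c) x (.inr (.inr (j, k))) = ∑ i, x (i, j, k) := by
  rw [Finsupp.weight_apply, Finsupp.sum_fintype _ _ (by simp)]
  simp [cellDegree, Finsupp.single_apply, Fintype.sum_prod_type, ite_and]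

end Margins

section TwoByTwoByTwo

noncomputable def evenCells : Fin 2 × Fin 2 × Fin 2 →₀ ℕ :=
  Finsupp.single (0, 0, 0) 1 + Finsupp.single (0, 1, 1) 1 + Finsupp.single (1, 0, 1) 1 +
    Finsupp.single (1, 1, 0) 1

noncomputable def oddCells : Fin 2 × Fin 2 × Fin 2 →₀ ℕ :=
  Finsupp.single (0, 0, 1) 1 + Finsupp.single (0, 1, 0) 1 + Finsupp.single (1, 0, 0) 1 +
    Finsupp.single (1, 1, 1) 1

theorem exists_eq_add_smul_of_weight_eq {x y : Fin 2 × Fin 2 × Fin 2 →₀ ℕ}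
    (h : Finsupp.weight (cellDegree 2 2 2) x = Finsupp.weight (cellDegree 2 2 2) y)
    (hle : y (0, 0, 0) ≤ x (0, 0, 0)) :
    ∃ (z : Fin 2 × Fin 2 × Fin 2 →₀ ℕ) (m : ℕ), x = z + m • evenCells ∧ y = z + m • oddCells := by
  have hu (i j : Fin 2) : x (i, j, 0) + x (i, j, 1) = y (i, j, 0) + y (i, j, 1) := by
    simpa [weight_cellDegree_inl, Fin.sum_univ_two] using DFunLike.congr_fun h (.inl (i, j))
  have hv (i k : Fin 2) : x (i, 0, k) + x (i, 1, k) = y (i, 0, k) + y (i, 1, k) := by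
    simpa [weight_cellDegree_inr_inl, Fin.sum_univ_two] using
      DFunLike.congr_fun h (.inr (.inl (i, k)))
  have hw (j k : Fin 2) : x (0, j, k) + x (1, j, k) = y (0, j, k) + y (1, j, k) := by
    simpa [weight_cellDegree_inr_inr, Fin.sum_univ_two] using
      DFunLike.congr_fun h (.inr (.inr (j, k)))
  -- these seven margins already determine `x - y` from its entry at `(0, 0, 0)`
  have := hu 0 0; have := hu 0 1; have := hu 1 0; have := hu 1 1
  have := hv 0 0; have := hv 1 0; have := hw 0 0
  refine ⟨x - (x (0, 0, 0) - y (0, 0, 0)) • evenCells, x (0, 0, 0) - y (0, 0, 0), ?_, ?_⟩ <;>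
    ext p <;> fin_cases p <;> simp [evenCells, oddCells] <;> omega

theorem monomial_sub_monomial_mem_span {R : Type*} [CommRing R] {x y : Fin 2 × Fin 2 × Fin 2 →₀ ℕ}
    (h : Finsupp.weight (cellDegree 2 2 2) x = Finsupp.weight (cellDegree 2 2 2) y) :
    monomial x (1 : R) - monomial y 1 ∈ Ideal.span {monomial evenCells 1 - monomial oddCells 1} := by
  wlog hle : y (0, 0, 0) ≤ x (0, 0, 0) generalizing x y
  · simpa using neg_mem (this h.symm (le_of_not_ge hle))
  obtain ⟨z, m, rfl, rfl⟩ := exists_eq_add_smul_of_weight_eq h hle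
  rw [Ideal.mem_span_singleton]
  calc monomial evenCells (1 : R) - monomial oddCells 1
      ∣ monomial evenCells 1 ^ m - monomial oddCells 1 ^ m := sub_dvd_pow_sub_pow _ _ _
    _ ∣ monomial z 1 * (monomial evenCells 1 ^ m - monomial oddCells 1 ^ m) := dvd_mul_left _ _
    _ = monomial (z + m • evenCells) 1 - monomial (z + m • oddCells) 1 := by
      simp [monomial_pow, mul_sub, monomial_mul]

end TwoByTwoByTwo

/-- The toric ideal `I(2,2,2)` of the no-`3`-way-interaction model on
`2 × 2 × 2` tables is principal, generated by the degree-`4` binomial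
`t₁₁₁ t₁₂₂ t₂₁₂ t₂₂₁ − t₁₁₂ t₁₂₁ t₂₁₁ t₂₂₂` (written with `0`-based indices). -/
theorem I3_two_two_two_principal (K : Type) [Field K] :
    I3 K 2 2 2 = Ideal.span
      {(X (0, 0, 0) * X (0, 1, 1) * X (1, 0, 1) * X (1, 1, 0) -
        X (0, 0, 1) * X (0, 1, 0) * X (1, 0, 0) * X (1, 1, 1) :
        MvPolynomial (Fin 2 × Fin 2 × Fin 2) K)} := by
  have hgen : (X (0, 0, 0) * X (0, 1, 1) * X (1, 0, 1) * X (1, 1, 0) -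
      X (0, 0, 1) * X (0, 1, 0) * X (1, 0, 0) * X (1, 1, 1) :
      MvPolynomial (Fin 2 × Fin 2 × Fin 2) K) = monomial evenCells 1 - monomial oddCells 1 := by
    simp [evenCells, oddCells, X, monomial_mul]
  refine le_antisymm ?_ ?_
  · rw [hgen, I3, phi3_eq_aeval]
    exact ker_aeval_monomial_le _ _ fun x y => monomial_sub_monomial_mem_span
  · rw [Ideal.span_le, Set.singleton_subset_iff, SetLike.mem_coe, I3, RingHom.mem_ker]
    simp only [phi3, AlgHom.toRingHom_eq_coe, RingHom.coe_coe, map_sub, map_mul, aeval_X]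
    ring

end No3Way
end

section
/- Let H be a hypergraph and let f_𝓔 ∈ I_H be the binomial arising from a balanced edge set 𝓔 with n = |𝓔_blue| ≥ |𝓔_red|. Then f_𝓔 lies in the ideal generated by the binomials of I_H of total degree strictly less than n provided one of the following two conditions holds: (i) there exists a proper splitting set S of 𝓔 with a decomposition (Γ1, S, Γ2) in which |(Γ1)_blue| < n, |(Γ1)_red| < n, |(Γ2)_blue| < n and |(Γ2)_red| < n; or (ii) there exist a blue splitting set S and a red splitting set R of 𝓔, each of size less than n, with decompositions (Γ1, S, Γ2) and (Υ1, R, Υ2) respectively, such that |(Γ1)_blue| < n, |(Υ2)_red| < n, |(Γ2)_blue| ≤ n, |(Υ1)_red| ≤ n, and S ∩ R ≠ ∅. -/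
open MvPolynomial

/-!
Write `t^M` for the monomial of a multiset `M` of edges. If `S` is a splitting set of `𝓔` with
decomposition `(Γ1, S, Γ2)`, then `𝓔_blue = Γ1_blue ⊔ (Γ2_blue - S)` and
`𝓔_red = (Γ1_red - S) ⊔ Γ2_red`, whence
`f_𝓔 = t^(Γ2_blue - S) f_Γ1 + t^(Γ1_red - S) f_Γ2`; this settles (i).
In (ii) the same identity for `S` and for `R` gives
`f_𝓔 = t^(Γ2_blue - S) f_Γ1 + (t^Γ2_blue - t^Υ1_red) + t^(Υ1_red - R) f_Υ2`.
The middle binomial is balanced, and an edge of `S ∩ R` lies on both of its sides, so it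
factors out and leaves a balanced edge set of size `< n`.
-/

namespace ToricHG

section MultisetMonomial

variable (R : Type*) [CommSemiring R] {σ : Type*}

noncomputable def multisetMonomial (M : Multiset σ) : MvPolynomial σ R :=
  (M.map fun e => X e).prod

variable {R}

@[simp]
lemma multisetMonomial_zero : multisetMonomial R (0 : Multiset σ) = 1 := by
  simp [multisetMonomial]

lemma multisetMonomial_add (M N : Multiset σ) :
    multisetMonomial R (M + N) = multisetMonomial R M * multisetMonomial R N := by
  simp [multisetMonomial]

lemma multisetMonomial_cons (e : σ) (M : Multiset σ) :
    multisetMonomial R (e ::ₘ M) = X e * multisetMonomial R M := by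
  simp [multisetMonomial]

lemma multisetMonomial_eq_monomial [DecidableEq σ] (M : Multiset σ) :
    multisetMonomial R M = monomial (Multiset.toFinsupp M) 1 := by
  induction M using Multiset.induction with
  | empty => simp
  | cons e M ih =>
    rw [multisetMonomial_cons, ih, X, monomial_mul, one_mul, ← Multiset.singleton_add,
      Multiset.toFinsupp_add, Multiset.toFinsupp_singleton]

lemma totalDegree_multisetMonomial [Nontrivial R] (M : Multiset σ) :
    (multisetMonomial R M).totalDegree = Multiset.card M := by
  classical
  rw [multisetMonomial_eq_monomial, totalDegree_monomial _ one_ne_zero]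
  exact Multiset.toFinsupp_sum_eq M

end MultisetMonomial

variable {K : Type} [Field K] {V : Type} {E : Finset (Finset V)}

lemma binom_eq_sub (B R : Multiset (Edge V E)) :
    binom K V E B R = multisetMonomial K B - multisetMonomial K R := rfl

lemma binom_cons_cons (c : Edge V E) (B R : Multiset (Edge V E)) :
    binom K V E (c ::ₘ B) (c ::ₘ R) = X c * binom K V E B R := by
  simp only [binom_eq_sub, multisetMonomial_cons, mul_sub]

lemma isBinomial_binom {B R : Multiset (Edge V E)} (h : B ≠ R) :
    IsBinomial K V E (binom K V E B R) := by
  classical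
  exact ⟨_, _, fun hBR => h (Multiset.toFinsupp.injective hBR), by
    rw [binom_eq_sub, multisetMonomial_eq_monomial, multisetMonomial_eq_monomial]⟩

lemma totalDegree_binom_le (B R : Multiset (Edge V E)) :
    (binom K V E B R).totalDegree ≤ max (Multiset.card B) (Multiset.card R) := by
  rw [binom_eq_sub, ← totalDegree_multisetMonomial (R := K),
    ← totalDegree_multisetMonomial (R := K) R, ← totalDegree_neg (multisetMonomial K R)]
  exact (congrArg totalDegree (sub_eq_add_neg _ _)).le.trans (totalDegree_add _ _)

lemma phiH_multisetMonomial (M : Multiset (Edge V E)) :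
    phiH K V E (multisetMonomial K M) = multisetMonomial K (M.bind fun e => e.1.val) := by
  simp [phiH, multisetMonomial, map_multiset_prod, Multiset.map_bind]

variable [DecidableEq V]

lemma degIn_eq_count_bind (v : V) (M : Multiset (Edge V E)) :
    degIn V E v M = (M.bind fun e => e.1.val).count v := by
  induction M using Multiset.induction with
  | empty => simp [degIn]
  | cons e M ih =>
    by_cases hv : v ∈ e.1 <;>
      simp_all [degIn, Multiset.count_eq_of_nodup e.1.nodup, add_comm]

lemma balanced_iff_bind_eq (B R : Multiset (Edge V E)) :
    Balanced V E B R ↔ B.bind (fun e => e.1.val) = R.bind (fun e => e.1.val) := by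
  simp only [Balanced, degIn_eq_count_bind, Multiset.ext]

lemma balanced_cons_cons_iff (c : Edge V E) (B R : Multiset (Edge V E)) :
    Balanced V E (c ::ₘ B) (c ::ₘ R) ↔ Balanced V E B R := by
  simp only [balanced_iff_bind_eq, Multiset.cons_bind, add_right_inj]

lemma binom_mem_toricIdeal {B R : Multiset (Edge V E)} (h : Balanced V E B R) :
    binom K V E B R ∈ toricIdeal K V E := by
  rw [toricIdeal, RingHom.mem_ker, AlgHom.toRingHom_eq_coe, RingHom.coe_coe, binom_eq_sub,
    map_sub, sub_eq_zero, phiH_multisetMonomial, phiH_multisetMonomial,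
    (balanced_iff_bind_eq B R).1 h]

variable (K V E) in
noncomputable def binomialSpanBelow (n : ℕ) : Ideal (MvPolynomial (Edge V E) K) :=
  Ideal.span {f | f ∈ toricIdeal K V E ∧ IsBinomial K V E f ∧ f.totalDegree < n}

lemma binom_mem_binomialSpanBelow {n : ℕ} {B R : Multiset (Edge V E)} (h : Balanced V E B R)
    (hB : Multiset.card B < n) (hR : Multiset.card R < n) :
    binom K V E B R ∈ binomialSpanBelow K V E n := by
  by_cases hBR : B = R
  · simp [binom_eq_sub, hBR]
  · exact Ideal.subset_span ⟨binom_mem_toricIdeal h, isBinomial_binom hBR,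
      (totalDegree_binom_le B R).trans_lt (max_lt hB hR)⟩

lemma binom_mem_binomialSpanBelow_of_mem_of_mem {n : ℕ} {B R : Multiset (Edge V E)}
    {c : Edge V E} (h : Balanced V E B R) (hcB : c ∈ B) (hcR : c ∈ R)
    (hB : Multiset.card B ≤ n) (hR : Multiset.card R ≤ n) :
    binom K V E B R ∈ binomialSpanBelow K V E n := by
  rw [← Multiset.cons_erase hcB, ← Multiset.cons_erase hcR, balanced_cons_cons_iff] at h
  rw [← Multiset.cons_erase hcB, ← Multiset.cons_erase hcR, binom_cons_cons]
  exact Ideal.mul_mem_left _ _ (binom_mem_binomialSpanBelow h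
    ((Multiset.card_erase_lt_of_mem hcB).trans_le hB)
    ((Multiset.card_erase_lt_of_mem hcR).trans_le hR))

lemma binom_eq_of_add_eq {B R S G1b G1r G2b G2r : Multiset (Edge V E)}
    (hB : B + S = G1b + G2b) (hR : R + S = G1r + G2r) (hS1 : S ≤ G1r) (hS2 : S ≤ G2b) :
    binom K V E B R = multisetMonomial K (G2b - S) * binom K V E G1b G1r +
      multisetMonomial K (G1r - S) * binom K V E G2b G2r := by
  obtain ⟨B₂, rfl⟩ := Multiset.le_iff_exists_add.mp hS2
  obtain ⟨R₁, rfl⟩ := Multiset.le_iff_exists_add.mp hS1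
  have hB' : B = G1b + B₂ := add_right_cancel (b := S) (by rw [hB]; abel)
  have hR' : R = R₁ + G2r := add_right_cancel (b := S) (by rw [hR]; abel)
  simp only [add_tsub_cancel_left, binom_eq_sub, hB', hR', multisetMonomial_add]
  ring

lemma binom_mem_binomialSpanBelow_of_splittingSetWith {n : ℕ}
    {B R S G1b G1r G2b G2r : Multiset (Edge V E)}
    (h : SplittingSetWith V E B R S G1b G1r G2b G2r)
    (h1b : Multiset.card G1b < n) (h1r : Multiset.card G1r < n)
    (h2b : Multiset.card G2b < n) (h2r : Multiset.card G2r < n) :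
    binom K V E B R ∈ binomialSpanBelow K V E n := by
  obtain ⟨-, -, -, hbal1, hbal2, -, -, rfl, hB, hR⟩ := h
  rw [binom_eq_of_add_eq hB hR Multiset.inter_le_left Multiset.inter_le_right]
  exact add_mem (Ideal.mul_mem_left _ _ (binom_mem_binomialSpanBelow hbal1 h1b h1r))
    (Ideal.mul_mem_left _ _ (binom_mem_binomialSpanBelow hbal2 h2b h2r))

lemma binom_mem_binomialSpanBelow_of_blue_of_red {n : ℕ}
    {B R S T G1b G2b G2r U1b U1r U2r : Multiset (Edge V E)} (hbal : Balanced V E B R)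
    (hS : SplittingSetWith V E B R S G1b S G2b G2r)
    (hT : SplittingSetWith V E B R T U1b U1r T U2r)
    (hSn : Multiset.card S < n) (hTn : Multiset.card T < n)
    (hG1b : Multiset.card G1b < n) (hU2r : Multiset.card U2r < n)
    (hG2b : Multiset.card G2b ≤ n) (hU1r : Multiset.card U1r ≤ n) (hST : S ∩ T ≠ 0) :
    binom K V E B R ∈ binomialSpanBelow K V E n := by
  obtain ⟨-, -, -, hbalG1, hbalG2, -, -, hS_eq, hSB, hSR⟩ := hS
  obtain ⟨-, -, -, hbalU1, hbalU2, -, -, hT_eq, hTB, hTR⟩ := hT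
  have hS_le : S ≤ G2b := hS_eq ▸ Multiset.inter_le_right
  have hT_le : T ≤ U1r := hT_eq ▸ Multiset.inter_le_left
  have hblue := binom_eq_of_add_eq (K := K) hSB hSR le_rfl hS_le
  have hred := binom_eq_of_add_eq (K := K) hTB hTR hT_le le_rfl
  obtain rfl : R = G2r := add_left_cancel ((add_comm S R).trans hSR)
  obtain rfl : B = U1b := add_right_cancel hTB
  simp only [tsub_self, multisetMonomial_zero, one_mul] at hblue hred
  have key : binom K V E B R = multisetMonomial K (G2b - S) * binom K V E G1b S +
      binom K V E G2b U1r + multisetMonomial K (U1r - T) * binom K V E T U2r := by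
    simp only [binom_eq_sub] at hblue hred ⊢
    linear_combination hblue + hred
  obtain ⟨c, hc⟩ := Multiset.exists_mem_of_ne_zero hST
  have hbal_mid : Balanced V E G2b U1r := fun v =>
    (hbalG2 v).trans ((hbal v).symm.trans (hbalU1 v))
  rw [key]
  refine add_mem (add_mem ?_ ?_) (Ideal.mul_mem_left _ _ ?_)
  · exact Ideal.mul_mem_left _ _ (binom_mem_binomialSpanBelow hbalG1 hG1b hSn)
  · exact binom_mem_binomialSpanBelow_of_mem_of_mem hbal_mid
      (Multiset.mem_of_le hS_le (Multiset.mem_inter.1 hc).1)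
      (Multiset.mem_of_le hT_le (Multiset.mem_inter.1 hc).2) hG2b hU1r
  · exact binom_mem_binomialSpanBelow hbalU2 hTn hU2r

theorem nonuniform_degree_bound_general
    (K : Type) [Field K] (V : Type) [DecidableEq V]
    (E : Finset (Finset V))
    (B R : Multiset (Edge V E)) (n : ℕ)
    (hbal : Balanced V E B R)
    (hcond :
      (∃ S G1b G1r G2b G2r : Multiset (Edge V E),
          SplittingSetWith V E B R S G1b G1r G2b G2r ∧ S < G1r ∧ S < G2b ∧
          Multiset.card G1b < n ∧ Multiset.card G1r < n ∧
          Multiset.card G2b < n ∧ Multiset.card G2r < n) ∨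
      (∃ S T G1b G1r G2b G2r U1b U1r U2b U2r : Multiset (Edge V E),
          SplittingSetWith V E B R S G1b G1r G2b G2r ∧ G1r = S ∧ Multiset.card S < n ∧
          SplittingSetWith V E B R T U1b U1r U2b U2r ∧ U2b = T ∧ Multiset.card T < n ∧
          Multiset.card G1b < n ∧ Multiset.card U2r < n ∧
          Multiset.card G2b ≤ n ∧ Multiset.card U1r ≤ n ∧ S ∩ T ≠ 0)) :
    binom K V E B R ∈
      Ideal.span {f | f ∈ toricIdeal K V E ∧ IsBinomial K V E f ∧ f.totalDegree < n} := by
  rcases hcond with ⟨S, G1b, G1r, G2b, G2r, hS, -, -, h1b, h1r, h2b, h2r⟩ |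
    ⟨S, T, G1b, G1r, G2b, G2r, U1b, U1r, U2b, U2r, hS, rfl, hSn, hT, rfl, hTn, h1b, h2r, h2b,
      h1r, hST⟩
  · exact binom_mem_binomialSpanBelow_of_splittingSetWith hS h1b h1r h2b h2r
  · exact binom_mem_binomialSpanBelow_of_blue_of_red hbal hS hT hSn hTn h1b h2r h2b h1r hST

/-- Let `f_𝓔 ∈ I_H` arise from a balanced edge set `𝓔 = (B, R)` with
`n = |B| ≥ |R|`. If (i) `𝓔` has a proper splitting set whose decomposition has all four parts of
size `< n`, or (ii) `𝓔` has a blue splitting set `S` and a red splitting set `T`, each of size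
`< n`, with decompositions satisfying `|Γ1_blue| < n`, `|Υ2_red| < n`, `|Γ2_blue| ≤ n`,
`|Υ1_red| ≤ n`, and `S ∩ T ≠ ∅`, then `f_𝓔` lies in the ideal generated by the binomials of
`I_H` of total degree strictly less than `n`. -/
theorem nonuniform_degree_bound
    (K : Type) [Field K] (V : Type) [Fintype V] [DecidableEq V]
    (E : Finset (Finset V)) (hE : ∀ e ∈ E, e.Nonempty)
    (B R : Multiset (Edge V E)) (n : ℕ)
    (hbal : Balanced V E B R)
    (hn : Multiset.card B = n) (hge : Multiset.card R ≤ Multiset.card B)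
    (hcond :
      (∃ S G1b G1r G2b G2r : Multiset (Edge V E),
          SplittingSetWith V E B R S G1b G1r G2b G2r ∧ S < G1r ∧ S < G2b ∧
          Multiset.card G1b < n ∧ Multiset.card G1r < n ∧
          Multiset.card G2b < n ∧ Multiset.card G2r < n) ∨
      (∃ S T G1b G1r G2b G2r U1b U1r U2b U2r : Multiset (Edge V E),
          SplittingSetWith V E B R S G1b G1r G2b G2r ∧ G1r = S ∧ Multiset.card S < n ∧
          SplittingSetWith V E B R T U1b U1r U2b U2r ∧ U2b = T ∧ Multiset.card T < n ∧
          Multiset.card G1b < n ∧ Multiset.card U2r < n ∧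
          Multiset.card G2b ≤ n ∧ Multiset.card U1r ≤ n ∧ S ∩ T ≠ 0)) :
    binom K V E B R ∈
      Ideal.span {f | f ∈ toricIdeal K V E ∧ IsBinomial K V E f ∧ f.totalDegree < n} :=
  nonuniform_degree_bound_general K V E B R n hbal hcond

end ToricHG
end

section
/- Fix a field k and an integer n ≥ 2. Let H1 be the hypergraph on vertex set V = {1, …, n} whose edges are all subsets of V of size at least 2, and let H2 be the hypergraph on V whose edges are all subsets of V of size 2 or 3. If d ≥ 2 is an integer such that the toric ideal I_{H2} is generated in degree at most d, then the toric ideal I_{H1} is generated in degree at most d. -/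
open MvPolynomial

namespace ToricHG

variable {K : Type} [Field K] {V : Type} [Fintype V] [DecidableEq V]



/-- A canonical 2-element subset of `e` (junk if `e.card < 2`). -/
noncomputable def pick (e : Finset V) : Finset V :=
  if h : 2 ≤ e.card then (Finset.exists_subset_card_eq h).choose else ∅

lemma pick_subset (e : Finset V) : pick e ⊆ e := by
  unfold pick; split_ifs with h
  · exact (Finset.exists_subset_card_eq h).choose_spec.1
  · exact Finset.empty_subset _

lemma pick_card (e : Finset V) (h : 2 ≤ e.card) : (pick e).card = 2 := by
  unfold pick; rw [dif_pos h]
  exact (Finset.exists_subset_card_eq h).choose_spec.2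

/-- Decompose a finset of size `≥ 2` into pieces of size 2 or 3. -/
noncomputable def dec : Finset V → Multiset (Finset V)
  | e =>
    if h : e.card ≤ 3 then {e}
    else
      have : (e \ pick e).card < e.card := by
        rw [Finset.card_sdiff_of_subset (pick_subset e), pick_card e (by omega)]; omega
      pick e ::ₘ dec (e \ pick e)
  termination_by e => e.card

lemma dec_spec : ∀ e : Finset V, 2 ≤ e.card →
    (∀ a ∈ dec e, a ⊆ e ∧ (a.card = 2 ∨ a.card = 3)) ∧
      (dec e).bind Finset.val = e.val := by
  intro e
  induction e using Finset.strongInduction with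
  | _ e ih =>
    intro h2
    rw [dec]
    split_ifs with h3
    · refine ⟨?_, by simp⟩
      intro a ha
      rw [Multiset.mem_singleton] at ha
      subst ha
      exact ⟨subset_rfl, by omega⟩
    · have hpc := pick_card e h2
      have hps := pick_subset e
      have hcd : (e \ pick e).card = e.card - 2 := by
        rw [Finset.card_sdiff_of_subset hps, hpc]
      have h2' : 2 ≤ (e \ pick e).card := by omega
      have hss : e \ pick e ⊂ e :=
        Finset.sdiff_ssubset hps (Finset.card_pos.mp (by omega))
      obtain ⟨ih1, ih2⟩ := ih _ hss h2'
      constructor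
      · intro a ha
        rw [Multiset.mem_cons] at ha
        rcases ha with rfl | ha
        · exact ⟨hps, Or.inl hpc⟩
        · exact ⟨(ih1 a ha).1.trans (Finset.sdiff_subset), (ih1 a ha).2⟩
      · rw [Multiset.cons_bind, ih2, Finset.sdiff_val]
        exact add_tsub_cancel_of_le (Finset.val_le_iff.mpr hps)


/-- The monomial in `k[t_e : e ∈ E]` indexed by a multiset of finsets. -/
noncomputable def mon (E : Finset (Finset V)) (M : Multiset (Finset V)) :
    MvPolynomial (Edge V E) K :=
  (M.map (fun a => if h : a ∈ E then (X ⟨a, h⟩ : MvPolynomial (Edge V E) K) else 1)).prod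

lemma phi_mon (E : Finset (Finset V)) (M : Multiset (Finset V)) (hM : ∀ a ∈ M, a ∈ E) :
    phiH K V E (mon E M) = ((M.bind Finset.val).map X).prod := by
  rw [mon, map_multiset_prod, Multiset.map_map, Multiset.map_bind, Multiset.prod_bind]
  refine congrArg _ (Multiset.map_congr rfl ?_)
  intro a ha
  simp only [Function.comp_apply, dif_pos (hM a ha), phiH, aeval_X,
    Finset.prod_eq_multiset_prod]

lemma rename_mon (E1 E2 : Finset (Finset V)) (hsub : E2 ⊆ E1) (M : Multiset (Finset V))
    (hM : ∀ a ∈ M, a ∈ E2) :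
    rename (fun x : Edge V E2 => (⟨x.1, hsub x.2⟩ : Edge V E1)) (mon E2 M : MvPolynomial (Edge V E2) K) = mon E1 M := by
  rw [mon, mon, map_multiset_prod, Multiset.map_map]
  refine congrArg _ (Multiset.map_congr rfl ?_)
  intro a ha
  simp only [Function.comp_apply, dif_pos (hM a ha), dif_pos (hsub (hM a ha)), rename_X]

lemma diff_mem {σ : Type} {A : Type} [CommRing A] [Algebra K A]
    (α β : MvPolynomial σ K →ₐ[K] A) (J : Ideal A)
    (h : ∀ i, α (X i) - β (X i) ∈ J) (f : MvPolynomial σ K) : α f - β f ∈ J := by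
  induction f using MvPolynomial.induction_on with
  | C a =>
    rw [show (C a : MvPolynomial σ K) = algebraMap K _ a from rfl, AlgHom.commutes,
      AlgHom.commutes, sub_self]
    exact J.zero_mem
  | add f g hf hg =>
    rw [map_add, map_add]
    have : α f + α g - (β f + β g) = (α f - β f) + (α g - β g) := by ring
    rw [this]; exact J.add_mem hf hg
  | mul_X f i hf =>
    rw [map_mul, map_mul]
    have : α f * α (X i) - β f * β (X i)
        = α f * (α (X i) - β (X i)) + (α f - β f) * β (X i) := by ring
    rw [this]
    exact J.add_mem (J.mul_mem_left _ (h i)) (J.mul_mem_right _ hf)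



lemma mem_toricIdeal (E : Finset (Finset V)) (f : MvPolynomial (Edge V E) K) :
    f ∈ toricIdeal K V E ↔ phiH K V E f = 0 := by
  rw [toricIdeal]
  exact RingHom.mem_ker

lemma key (E1 : Finset (Finset V)) (hE1mem : ∀ a : Finset V, 2 ≤ a.card → a ∈ E1)
    (d : ℕ) (hd : 2 ≤ d) :
    ∀ e : Finset V, 2 ≤ e.card → ∀ he : e ∈ E1,
      (X ⟨e, he⟩ : MvPolynomial (Edge V E1) K) - mon E1 (dec e) ∈
        Ideal.span {f : MvPolynomial (Edge V E1) K |
          f ∈ toricIdeal K V E1 ∧ f.totalDegree ≤ d} := by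
  intro e
  induction e using Finset.strongInduction with
  | _ e ih =>
    intro h2 he
    rw [dec]
    split_ifs with h3
    · have : mon E1 ({e} : Multiset (Finset V))
          = (X ⟨e, he⟩ : MvPolynomial (Edge V E1) K) := by
        simp [mon, dif_pos he]
      rw [this, sub_self]
      exact Ideal.zero_mem _
    · have h2e : 2 ≤ e.card := by omega
      have hpc : (pick e).card = 2 := pick_card e h2
      have hps : pick e ⊆ e := pick_subset e
      have hbc : (e \ pick e).card = e.card - 2 := by rw [Finset.card_sdiff_of_subset hps, hpc]
      have hb2 : 2 ≤ (e \ pick e).card := by omega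
      have ha1 : pick e ∈ E1 := hE1mem _ (by omega)
      have hb1 : e \ pick e ∈ E1 := hE1mem _ hb2
      have hss : e \ pick e ⊂ e := Finset.sdiff_ssubset hps (Finset.card_pos.mp (by omega))
      have hmon : (mon E1 (pick e ::ₘ dec (e \ pick e)) : MvPolynomial (Edge V E1) K)
          = X ⟨pick e, ha1⟩ * mon E1 (dec (e \ pick e)) := by
        rw [mon, Multiset.map_cons, Multiset.prod_cons, dif_pos ha1]; rfl
      rw [hmon]
      have hstep : (X ⟨e, he⟩ : MvPolynomial (Edge V E1) K)
          - X ⟨pick e, ha1⟩ * X ⟨e \ pick e, hb1⟩ ∈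
          Ideal.span {f : MvPolynomial (Edge V E1) K |
            f ∈ toricIdeal K V E1 ∧ f.totalDegree ≤ d} := by
        apply Ideal.subset_span
        refine ⟨?_, ?_⟩
        · rw [mem_toricIdeal]
          rw [map_sub, map_mul, phiH, aeval_X, aeval_X, aeval_X]
          rw [← Finset.prod_union (Finset.disjoint_sdiff), Finset.union_sdiff_of_subset hps,
            sub_self]
        · have hm : ((X ⟨pick e, ha1⟩ * X ⟨e \ pick e, hb1⟩ :
              MvPolynomial (Edge V E1) K)).totalDegree ≤ 2 :=
            le_trans (totalDegree_mul _ _) (by simp [totalDegree_X])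
          rw [sub_eq_add_neg]
          refine le_trans (totalDegree_add _ _) (le_trans (max_le ?_ ?_) hd)
          · simp [totalDegree_X]
          · rw [totalDegree_neg]; exact hm
      have hsplit : (X ⟨e, he⟩ : MvPolynomial (Edge V E1) K)
          - X ⟨pick e, ha1⟩ * mon E1 (dec (e \ pick e))
          = (X ⟨e, he⟩ - X ⟨pick e, ha1⟩ * X ⟨e \ pick e, hb1⟩)
            + X ⟨pick e, ha1⟩ * (X ⟨e \ pick e, hb1⟩ - mon E1 (dec (e \ pick e))) := by
        ring
      rw [hsplit]
      exact Ideal.add_mem _ hstep (Ideal.mul_mem_left _ _ (ih _ hss hb2 hb1))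


/-- For `n ≥ 2`, let `H1` be the hypergraph on `{1, …, n}` whose edges are all
subsets of size at least `2`, and `H2` the hypergraph whose edges are all subsets of size `2` or
`3`. If `I_{H2}` is generated in degree at most `d` (for some `d ≥ 2`), then so is `I_{H1}`. -/
theorem cumulant_reduction_to_small_edges
    (K : Type) [Field K] (n : ℕ) (hn : 2 ≤ n) (d : ℕ) (hd : 2 ≤ d)
    (E1 E2 : Finset (Finset (Fin n)))
    (hE1 : E1 = Finset.univ.filter (fun e : Finset (Fin n) => 2 ≤ e.card))
    (hE2 : E2 = Finset.univ.filter (fun e : Finset (Fin n) => e.card = 2 ∨ e.card = 3))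
    (h : GenInDegLE K (toricIdeal K (Fin n) E2) d) :
    GenInDegLE K (toricIdeal K (Fin n) E1) d := by
  have hE1mem : ∀ a : Finset (Fin n), 2 ≤ a.card → a ∈ E1 := by
    intro a ha; rw [hE1]; simp [ha]
  have hE1mem' : ∀ a ∈ E1, 2 ≤ a.card := by
    intro a ha; rw [hE1] at ha; simpa using ha
  have hE2mem : ∀ a : Finset (Fin n), a.card = 2 ∨ a.card = 3 → a ∈ E2 := by
    intro a ha; rw [hE2]; simp [ha]
  have hsub : E2 ⊆ E1 := by
    intro a ha
    rw [hE2] at ha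
    simp only [Finset.mem_filter, Finset.mem_univ, true_and] at ha
    exact hE1mem a (by omega)
  have hdecmem : ∀ e : Finset (Fin n), 2 ≤ e.card → ∀ a ∈ dec e, a ∈ E2 :=
    fun e he a ha => hE2mem a ((dec_spec e he).1 a ha).2
  set ι : MvPolynomial (Edge (Fin n) E2) K →ₐ[K] MvPolynomial (Edge (Fin n) E1) K :=
    rename (fun x : Edge (Fin n) E2 => (⟨x.1, hsub x.2⟩ : Edge (Fin n) E1)) with hι
  set ψ : MvPolynomial (Edge (Fin n) E1) K →ₐ[K] MvPolynomial (Edge (Fin n) E2) K :=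
    aeval (fun e : Edge (Fin n) E1 =>
      (mon E2 (dec e.1) : MvPolynomial (Edge (Fin n) E2) K)) with hψ
  have hcomp : (phiH K (Fin n) E2).comp ψ = phiH K (Fin n) E1 := by
    apply algHom_ext
    intro i
    rw [AlgHom.comp_apply, hψ, aeval_X,
      phi_mon E2 _ (hdecmem i.1 (hE1mem' i.1 i.2)), (dec_spec i.1 (hE1mem' i.1 i.2)).2]
    rw [phiH, aeval_X, Finset.prod_eq_multiset_prod]
  rw [GenInDegLE]
  refine le_antisymm ?_ (Ideal.span_le.mpr fun f hf => hf.1)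
  intro f hf
  set J := Ideal.span {g : MvPolynomial (Edge (Fin n) E1) K |
    g ∈ toricIdeal K (Fin n) E1 ∧ g.totalDegree ≤ d} with hJ
  have hψf : ψ f ∈ toricIdeal K (Fin n) E2 := by
    rw [mem_toricIdeal, ← AlgHom.comp_apply, hcomp]
    exact (mem_toricIdeal _ _).mp hf
  rw [h] at hψf
  have hιmem : ι (ψ f) ∈ J := by
    have hle : Ideal.span {g : MvPolynomial (Edge (Fin n) E2) K |
        g ∈ toricIdeal K (Fin n) E2 ∧ g.totalDegree ≤ d} ≤ Ideal.comap ι.toRingHom J := by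
      rw [Ideal.span_le]
      intro g hg
      obtain ⟨hg1, hg2⟩ := hg
      refine Ideal.subset_span ⟨?_, le_trans (totalDegree_rename_le _ _) hg2⟩
      rw [mem_toricIdeal]
      simp only [AlgHom.toRingHom_eq_coe, RingHom.coe_coe, hι]
      rw [phiH, aeval_rename]
      exact (mem_toricIdeal _ _).mp hg1
    exact Ideal.mem_comap.mp (hle hψf)
  have hdiff : f - ι (ψ f) ∈ J := by
    have := diff_mem (AlgHom.id K (MvPolynomial (Edge (Fin n) E1) K)) (ι.comp ψ) J ?_ f
    · simpa using this
    · intro i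
      rw [AlgHom.id_apply, AlgHom.comp_apply, hψ, aeval_X, hι,
        rename_mon E1 E2 hsub _ (hdecmem i.1 (hE1mem' i.1 i.2))]
      have := key (K := K) E1 hE1mem d hd i.1 (hE1mem' i.1 i.2) i.2
      simpa using this
  have hfe : f = (f - ι (ψ f)) + ι (ψ f) := by ring
  rw [hfe]
  exact J.add_mem hdiff hιmem

end ToricHG
end
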